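/- In the polynomial ring 𝔽₅[t₁,…,t₁₁][x₁₂,x₁₃,x₁₄,x₁₅,x₂₃,x₂₄,x₂₅,x₃₄,x₃₅,x₄₅], let Q = t₁x₁₄x₂₄ + t₂x₂₃x₃₄ + t₃x₂₅² + t₄x₁₅x₃₅ + t₅x₁₄x₄₅ + t₆x₃₄x₃₅ + t₇x₁₂x₂₃ + t₈x₁₂x₃₅ + t₉x₁₃x₂₅ + t₁₀x₁₅x₂₃ + t₁₁x₁₃². At the point of 𝔽₅[t₁,…,t₁₁]¹⁰ with x₂₄ = t₅, x₄₅ = −t₁ and all other coordinates equal to 0: Q vanishes, all five Plücker quadrics q₁,…,q₅ vanish, and all ten partial derivatives ∂Q/∂x_{ij} vanish. (Hence this point of ℙ⁹ is a singular point of Gr(2,5) ∩ {Q = 0} over 𝔽₅(t₁,…,t₁₁).) -/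

import Mathlib

noncomputable section

open MvPolynomial

/-- The coefficient ring `𝔽₅[t₁,…,t₁₁]`. -/
abbrev R15 : Type := MvPolynomial (Fin 11) (ZMod 5)

/-- The parameter `tᵢ`, viewed as a constant in
`𝔽₅[t₁,…,t₁₁][x₁₂,x₁₃,x₁₄,x₁₅,x₂₃,x₂₄,x₂₅,x₃₄,x₃₅,x₄₅]`
(the ten Plücker variables are indexed `0,…,9` in the displayed order). -/
def T15 (i : Fin 11) : MvPolynomial (Fin 10) R15 := C (X i)

/-- `Q = t₁x₁₄x₂₄ + t₂x₂₃x₃₄ + t₃x₂₅² + t₄x₁₅x₃₅ + t₅x₁₄x₄₅ + t₆x₃₄x₃₅ + t₇x₁₂x₂₃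
  + t₈x₁₂x₃₅ + t₉x₁₃x₂₅ + t₁₀x₁₅x₂₃ + t₁₁x₁₃²`. -/
def Q15 : MvPolynomial (Fin 10) R15 :=
  T15 0 * (X 2 * X 5) + T15 1 * (X 4 * X 7) + T15 2 * (X 6 * X 6) + T15 3 * (X 3 * X 8) +
  T15 4 * (X 2 * X 9) + T15 5 * (X 7 * X 8) + T15 6 * (X 0 * X 4) + T15 7 * (X 0 * X 8) +
  T15 8 * (X 1 * X 6) + T15 9 * (X 3 * X 4) + T15 10 * (X 1 * X 1)

/-- The five Plücker quadrics `q₁,…,q₅` in the variables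
`x₁₂,x₁₃,x₁₄,x₁₅,x₂₃,x₂₄,x₂₅,x₃₄,x₃₅,x₄₅` (indexed `0,…,9`). -/
def plucker15 : Fin 5 → MvPolynomial (Fin 10) R15 :=
  ![X 4 * X 9 - X 5 * X 8 + X 6 * X 7,
    X 1 * X 9 - X 2 * X 8 + X 3 * X 7,
    X 0 * X 9 - X 2 * X 6 + X 3 * X 5,
    X 0 * X 8 - X 1 * X 6 + X 3 * X 4,
    X 0 * X 7 - X 1 * X 5 + X 2 * X 4]

/-- The point with `x₂₄ = t₅`, `x₄₅ = −t₁` and all other coordinates zero. -/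
def pt15 : Fin 10 → R15 :=
  ![0, 0, 0, 0, 0, X 4, 0, 0, 0, -(X 0)]

/-! The point is supported on `x₂₄, x₄₅`. No Plücker quadric contains the monomial `x₂₄x₄₅`, and
in `Q` these two variables occur only in `x₁₄(t₁x₂₄ + t₅x₄₅)`. Every other monomial of `Q` is a
product of two variables that vanish at the point, so it contributes neither to the value nor to
the gradient there; what is left is `∂Q/∂x₁₄ = t₁x₂₄ + t₅x₄₅`, which vanishes at the point. -/

lemma eval_pt15_Q15 : eval pt15 Q15 = 0 := by
  simp [Q15, T15, pt15]

lemma eval_pt15_plucker15 (j : Fin 5) : eval pt15 (plucker15 j) = 0 := by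
  fin_cases j <;> simp [plucker15, pt15]

lemma eval_pt15_pderiv_Q15 (i : Fin 10) : eval pt15 (pderiv i Q15) = 0 := by
  fin_cases i <;> simp [Q15, T15, pt15]
  -- `∂Q/∂x₁₄` at the point: `t₁t₅ − t₅t₁`
  ring

theorem family1_p5_singular_point :
    eval pt15 Q15 = 0 ∧
    (∀ j : Fin 5, eval pt15 (plucker15 j) = 0) ∧
    (∀ i : Fin 10, eval pt15 (pderiv i Q15) = 0) :=
  ⟨eval_pt15_Q15, eval_pt15_plucker15, eval_pt15_pderiv_Q15⟩
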